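/- In a finite MDP with γ ≤ c < 1, for any two states s_i, s_j, the difference in optimal values is bounded by the bisimulation distance scaled by 1/(1−c): |V*(s_i) − V*(s_j)| ≤ (1/(1−c))·d̃(s_i, s_j), where d̃ is the fixed point of the max-over-actions bisimulation operator F(d)(x,y) = max_a [(1−c)|R^a_x − R^a_y| + c·W₁(d)(P^a_x, P^a_y)]. Consequently, d̃(s_i,s_j) = 0 implies V*(s_i) = V*(s_j). -/

import Mathlib

/-!
Instead of iterating the Bellman operator, consider the largest Lipschitz defect
`L = max_{u,v} (V u - V v - d̃ u v / (1 - c))` of `V`. Expanding `V x` at a maximising action,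
coupling the transition laws of `x` and `y` (weak Kantorovich duality) and using that `d̃` is a
fixed point of the bisimulation operator gives `L ≤ γ L`, hence `L ≤ 0` because `γ < 1`.
-/

open Finset

structure IsPseudometric {S : Type*} (d : S → S → ℝ) : Prop where
  nonneg : ∀ x y, 0 ≤ d x y
  refl : ∀ x, d x x = 0
  symm : ∀ x y, d x y = d y x
  triangle : ∀ x y z, d x z ≤ d x y + d y z

def IsProb {S : Type*} [Fintype S] (p : S → ℝ) : Prop :=
  (∀ s, 0 ≤ p s) ∧ ∑ s, p s = 1

def IsCoupling {S : Type*} [Fintype S] (γ : S → S → ℝ) (p q : S → ℝ) : Prop :=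
  (∀ x y, 0 ≤ γ x y) ∧ (∀ x, ∑ y, γ x y = p x) ∧ (∀ y, ∑ x, γ x y = q y)

noncomputable def W1 {S : Type*} [Fintype S] (d : S → S → ℝ) (p q : S → ℝ) : ℝ :=
  sInf { r | ∃ γ : S → S → ℝ, IsCoupling γ p q ∧ r = ∑ x, ∑ y, d x y * γ x y }

noncomputable def bisimF {S : Type*} [Fintype S] (R : S → ℝ) (P : S → S → ℝ) (c : ℝ)
    (d : S → S → ℝ) : S → S → ℝ :=
  fun x y => (1 - c) * |R x - R y| + c * W1 d (P x) (P y)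

noncomputable def bisimFA {S A : Type*} [Fintype S] [Fintype A] [Nonempty A]
    (R : S → A → ℝ) (P : S → A → S → ℝ) (c : ℝ) (d : S → S → ℝ) : S → S → ℝ :=
  fun x y => ⨆ a : A, ((1 - c) * |R x a - R y a| + c * W1 d (P x a) (P y a))

section Coupling

variable {S : Type*} [Fintype S]

lemma IsProb.isCoupling_mul {p q : S → ℝ} (hp : IsProb p) (hq : IsProb q) :
    IsCoupling (fun u v => p u * q v) p q := by
  refine ⟨fun u v => mul_nonneg (hp.1 u) (hq.1 v), fun u => ?_, fun v => ?_⟩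
  · rw [← mul_sum, hq.2, mul_one]
  · rw [← sum_mul, hp.2, one_mul]

lemma couplingCosts_nonempty (d : S → S → ℝ) {p q : S → ℝ} (hp : IsProb p) (hq : IsProb q) :
    {r | ∃ g : S → S → ℝ, IsCoupling g p q ∧ r = ∑ x, ∑ y, d x y * g x y}.Nonempty :=
  ⟨_, _, hp.isCoupling_mul hq, rfl⟩

lemma W1_nonneg {d : S → S → ℝ} (hd : ∀ x y, 0 ≤ d x y) {p q : S → ℝ}
    (hp : IsProb p) (hq : IsProb q) : 0 ≤ W1 d p q := by
  refine le_csInf (couplingCosts_nonempty d hp hq) ?_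
  rintro r ⟨g, hg, rfl⟩
  exact sum_nonneg fun u _ => sum_nonneg fun v _ => mul_nonneg (hd u v) (hg.1 u v)

lemma IsCoupling.sum_mass {g : S → S → ℝ} {p q : S → ℝ} (hg : IsCoupling g p q)
    (hp : IsProb p) : ∑ u, ∑ v, g u v = 1 := by
  rw [← hp.2]
  exact sum_congr rfl fun u _ => hg.2.1 u

lemma IsCoupling.sum_mul_sub_sum_mul {g : S → S → ℝ} {p q : S → ℝ} (hg : IsCoupling g p q)
    (V : S → ℝ) :
    ∑ u, p u * V u - ∑ v, q v * V v = ∑ u, ∑ v, g u v * (V u - V v) := by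
  have hp : ∑ u, p u * V u = ∑ u, ∑ v, g u v * V u :=
    sum_congr rfl fun u _ => by rw [← hg.2.1 u, sum_mul]
  have hq : ∑ v, q v * V v = ∑ u, ∑ v, g u v * V v := by
    rw [sum_comm]
    exact sum_congr rfl fun v _ => by rw [← hg.2.2 v, sum_mul]
  simp only [hp, hq, mul_sub, sum_sub_distrib]

/-- Weak Kantorovich duality. -/
lemma sum_mul_sub_sum_mul_le_W1 {d : S → S → ℝ} {V : S → ℝ} {K L : ℝ} (hK : 0 < K)
    (hV : ∀ u v, V u - V v ≤ K * d u v + L) {p q : S → ℝ} (hp : IsProb p) (hq : IsProb q) :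
    ∑ u, p u * V u - ∑ v, q v * V v ≤ K * W1 d p q + L := by
  suffices h : (∑ u, p u * V u - ∑ v, q v * V v - L) / K ≤ W1 d p q by
    rw [div_le_iff₀ hK] at h
    linarith
  refine le_csInf (couplingCosts_nonempty d hp hq) ?_
  rintro r ⟨g, hg, rfl⟩
  rw [div_le_iff₀ hK, hg.sum_mul_sub_sum_mul V]
  calc ∑ u, ∑ v, g u v * (V u - V v) - L
      ≤ ∑ u, ∑ v, g u v * (K * d u v + L) - L := by
        gcongr with u _ v _
        exacts [hg.1 u v, hV u v]
    _ = K * ∑ u, ∑ v, d u v * g u v + L * ∑ u, ∑ v, g u v - L := by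
        simp only [mul_sum, ← sum_add_distrib]
        congr 1
        exact sum_congr rfl fun u _ => sum_congr rfl fun v _ => by ring
    _ = (∑ u, ∑ v, d u v * g u v) * K := by rw [hg.sum_mass hp]; ring

end Coupling

lemma exists_iSup_sub_iSup_le {A : Type*} [Finite A] [Nonempty A] (f g : A → ℝ) :
    ∃ a, (⨆ a, f a) - (⨆ a, g a) ≤ f a - g a := by
  obtain ⟨a, ha⟩ := exists_eq_ciSup_of_finite (f := f)
  exact ⟨a, by rw [← ha]; gcongr; exact le_ciSup (Finite.bddAbove_range g) a⟩

lemma le_bisimFA {S A : Type*} [Fintype S] [Fintype A] [Nonempty A]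
    (R : S → A → ℝ) (P : S → A → S → ℝ) (c : ℝ) (d : S → S → ℝ) (x y : S) (a : A) :
    (1 - c) * |R x a - R y a| + c * W1 d (P x a) (P y a) ≤ bisimFA R P c d x y :=
  le_ciSup (f := fun a => (1 - c) * |R x a - R y a| + c * W1 d (P x a) (P y a))
    (Finite.bddAbove_range _) a

lemma sub_le_of_forall_sub_le_add_imp {S : Type*} [Finite S] {V : S → ℝ} {D : S → S → ℝ}
    {γ : ℝ} (hγ : γ < 1)
    (hstep : ∀ L, (∀ u v, V u - V v ≤ D u v + L) → ∀ u v, V u - V v ≤ D u v + γ * L)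
    (u v : S) : V u - V v ≤ D u v := by
  have : Nonempty (S × S) := ⟨(u, v)⟩
  obtain ⟨⟨x, y⟩, hmax⟩ := Finite.exists_max fun z : S × S => V z.1 - V z.2 - D z.1 z.2
  set L := V x - V y - D x y
  have hL : ∀ u v, V u - V v ≤ D u v + L := fun u v => by
    linarith [hmax (u, v)]
  have hLγ : L ≤ γ * L := by linarith [hstep L hL x y]
  have hL0 : L ≤ 0 := by nlinarith
  linarith [hL u v]

lemma sub_le_add_mul_of_bellman {S A : Type*} [Fintype S] [Fintype A] [Nonempty A]
    {R : S → A → ℝ} {P : S → A → S → ℝ} (hP : ∀ s a, IsProb (P s a))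
    {γ c : ℝ} (hγ0 : 0 ≤ γ) (hγc : γ ≤ c) (hc1 : c < 1)
    {dt : S → S → ℝ} (hdt : ∀ x y, 0 ≤ dt x y) (hfix : ∀ x y, bisimFA R P c dt x y ≤ dt x y)
    {V : S → ℝ} (hV : ∀ s, V s = ⨆ a : A, (R s a + γ * ∑ s', P s a s' * V s'))
    {L : ℝ} (hL : ∀ u v, V u - V v ≤ 1 / (1 - c) * dt u v + L) (x y : S) :
    V x - V y ≤ 1 / (1 - c) * dt x y + γ * L := by
  have hc : 0 < 1 - c := by linarith
  set K := 1 / (1 - c)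
  have hK : 0 < K := by positivity
  obtain ⟨a, ha⟩ := exists_iSup_sub_iSup_le (fun a => R x a + γ * ∑ s', P x a s' * V s')
    (fun a => R y a + γ * ∑ s', P y a s' * V s')
  set W := W1 dt (P x a) (P y a)
  have hW : 0 ≤ W := W1_nonneg hdt (hP x a) (hP y a)
  have hdual := sum_mul_sub_sum_mul_le_W1 hK hL (hP x a) (hP y a)
  have hbisim : (1 - c) * |R x a - R y a| + c * W ≤ dt x y := by
    exact (le_bisimFA R P c dt x y a).trans (hfix x y)
  calc V x - V y
      ≤ (R x a - R y a) + γ * (∑ s', P x a s' * V s' - ∑ s', P y a s' * V s') := by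
        rw [hV x, hV y]; linarith
    _ ≤ |R x a - R y a| + c * (K * W) + γ * L := by
        have := mul_le_mul_of_nonneg_left hdual hγ0
        have := mul_le_mul_of_nonneg_right hγc (mul_nonneg hK.le hW)
        linarith [le_abs_self (R x a - R y a)]
    _ = K * ((1 - c) * |R x a - R y a| + c * W) + γ * L := by
        have hKc : K * (1 - c) = 1 := one_div_mul_cancel hc.ne'
        linear_combination (-|R x a - R y a|) * hKc
    _ ≤ K * dt x y + γ * L := by gcongr

/-- with `γ ≤ c < 1`, the optimal value function is `1/(1-c)`-Lipschitz
with respect to the bisimulation metric; consequently bisimilar states (distance zero)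
share the same optimal value. -/
theorem stmt_19 {S A : Type*} [Fintype S] [Fintype A] [Nonempty A]
    (R : S → A → ℝ) (P : S → A → S → ℝ) (hP : ∀ s a, IsProb (P s a))
    (γ c : ℝ) (hγ0 : 0 ≤ γ) (hγc : γ ≤ c) (hc1 : c < 1)
    (dt : S → S → ℝ) (hdt : IsPseudometric dt) (hfix : bisimFA R P c dt = dt)
    (V : S → ℝ) (hV : ∀ s, V s = ⨆ a : A, (R s a + γ * ∑ s', P s a s' * V s')) :
    (∀ s_i s_j, |V s_i - V s_j| ≤ (1 / (1 - c)) * dt s_i s_j) ∧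
    (∀ s_i s_j, dt s_i s_j = 0 → V s_i = V s_j) := by
  have hlip : ∀ u v, V u - V v ≤ 1 / (1 - c) * dt u v :=
    sub_le_of_forall_sub_le_add_imp (hγc.trans_lt hc1) fun _ hL =>
      sub_le_add_mul_of_bellman hP hγ0 hγc hc1 hdt.nonneg (fun x y => (congrFun₂ hfix x y).le) hV hL
  have habs : ∀ u v, |V u - V v| ≤ 1 / (1 - c) * dt u v := fun u v =>
    abs_sub_le_iff.2 ⟨hlip u v, hdt.symm u v ▸ hlip v u⟩
  refine ⟨habs, fun u v h0 => ?_⟩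
  have := habs u v
  rw [h0, mul_zero] at this
  exact sub_eq_zero.mp (abs_nonpos_iff.mp this)
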